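/- arXiv:1511.02972 — 2 statements merged into one kernel-verified Lean document; each statement's English description precedes it below -/
import Mathlib

section
/- Let C be a linear binary code of length n, and let s be the number of nonzero weights occurring among vectors of the dual code C⊥, i.e., s = |{i : 1 ≤ i ≤ n and some vector of C⊥ has weight i}|. Then the covering radius of C satisfies R(C) ≤ s (the Delsarte bound). -/
open Matrix

/-- The (Hamming) weight of a vector in 𝔽₂ⁿ. -/
def wt {n : ℕ} (x : Fin n → ZMod 2) : ℕ :=
  (Finset.univ.filter (fun i => x i ≠ 0)).card

/-- The dual of a set of vectors, w.r.t. the standard inner product. -/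
def dualSet {n : ℕ} (S : Set (Fin n → ZMod 2)) : Set (Fin n → ZMod 2) :=
  {x | ∀ y ∈ S, x ⬝ᵥ y = 0}

/-- The minimum non-zero weight among vectors of a set. -/
noncomputable def minWtSet {n : ℕ} (S : Set (Fin n → ZMod 2)) : ℕ :=
  sInf {w | ∃ x ∈ S, x ≠ 0 ∧ wt x = w}

/-- The minimum weight of a linear code. -/
noncomputable def minWt {n : ℕ} (C : Submodule (ZMod 2) (Fin n → ZMod 2)) : ℕ :=
  minWtSet (C : Set (Fin n → ZMod 2))

/-- The minimum weight of the coset `x + C`. -/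
noncomputable def cosetMinWt {n : ℕ} (C : Submodule (ZMod 2) (Fin n → ZMod 2))
    (x : Fin n → ZMod 2) : ℕ :=
  sInf {w | ∃ c ∈ C, wt (x + c) = w}

/-- The covering radius: the largest minimum weight of a coset. -/
noncomputable def coveringRadius {n : ℕ} (C : Submodule (ZMod 2) (Fin n → ZMod 2)) : ℕ :=
  sSup {r | ∃ x : Fin n → ZMod 2, cosetMinWt C x = r}

/-!
Suppose some coset `x + C` has minimum weight greater than `s`, the number of nonzero dual
weights. For every `v` of weight at most `s` we then have `x + v ∉ C = C⊥⊥`, so the character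
`y ↦ (-1) ^ ((x + v) ⬝ᵥ y)` sums to zero over `C⊥`. Hence `y ↦ (-1) ^ (x ⬝ᵥ y)` is orthogonal on
`C⊥` to every function of Fourier degree at most `s`. But the weight is a function of degree one,
so `y ↦ ∏ w, (w - wt y)`, over the nonzero dual weights `w`, has degree at most `s`; it vanishes at
every nonzero dual codeword and not at `0`, a contradiction.
-/

open Finset

theorem exists_dotProduct_ne_zero_of_notMem {K ι : Type*} [Field K] [Fintype ι] [DecidableEq ι]
    {C : Submodule K (ι → K)} {u : ι → K} (hu : u ∉ C) :
    ∃ y, (∀ c ∈ C, y ⬝ᵥ c = 0) ∧ u ⬝ᵥ y ≠ 0 := by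
  obtain ⟨f, hfu, hCf⟩ := C.exists_le_ker_of_notMem hu
  have hf : ∀ w, (dotProductEquiv K ι).symm f ⬝ᵥ w = f w := fun w => by
    rw [← dotProductEquiv_apply_apply, LinearEquiv.apply_symm_apply]
  refine ⟨(dotProductEquiv K ι).symm f, fun c hc => (hf c).trans (hCf hc), ?_⟩
  rwa [dotProduct_comm, hf]

variable {n : ℕ}

theorem wt_add_le (u v : Fin n → ZMod 2) : wt (u + v) ≤ wt u + wt v :=
  (card_le_card fun i => by
    simp only [mem_filter, mem_union, mem_univ, true_and, Pi.add_apply]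
    contrapose!
    rintro ⟨hu, hv⟩
    simp [hu, hv]).trans (card_union_le _ _)

theorem cosetMinWt_le {C : Submodule (ZMod 2) (Fin n → ZMod 2)} (x : Fin n → ZMod 2)
    {c : Fin n → ZMod 2} (hc : c ∈ C) : cosetMinWt C x ≤ wt (x + c) :=
  Nat.sInf_le ⟨c, hc, rfl⟩

noncomputable def signChar : AddChar (ZMod 2) ℝ := AddChar.zmodChar 2 (neg_one_sq (R := ℝ))

theorem signChar_one : signChar 1 = -1 := by
  simp [signChar, AddChar.zmodChar_apply, ZMod.val_one]

noncomputable def walsh (u y : Fin n → ZMod 2) : ℝ := signChar (u ⬝ᵥ y)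

theorem walsh_zero_left (y : Fin n → ZMod 2) : walsh 0 y = 1 := by
  simp [walsh]

theorem walsh_add_left (u v y : Fin n → ZMod 2) : walsh (u + v) y = walsh u y * walsh v y := by
  simp [walsh, add_dotProduct, AddChar.map_add_eq_mul]

theorem sum_walsh_eq_zero (D : Submodule (ZMod 2) (Fin n → ZMod 2)) [Fintype D]
    {u : Fin n → ZMod 2} (hu : ∃ y ∈ D, u ⬝ᵥ y ≠ 0) : ∑ y : D, walsh u y = 0 := by
  let ψ : AddChar D ℝ := signChar.compAddMonoidHom
    ((dotProductBilin (ZMod 2) (ZMod 2) u).toAddMonoidHom.comp D.subtype.toAddMonoidHom)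
  refine (AddChar.sum_eq_zero_iff_ne_zero (ψ := ψ)).mpr (AddChar.ne_zero_iff.mpr ?_)
  obtain ⟨y, hyD, hy⟩ := hu
  refine ⟨⟨y, hyD⟩, ?_⟩
  have hy1 : u ⬝ᵥ y = 1 := (by decide : ∀ a : ZMod 2, a ≠ 0 → a = 1) _ hy
  norm_num [ψ, hy1, signChar_one]

theorem wt_single_one (i : Fin n) : wt (Pi.single i 1 : Fin n → ZMod 2) = 1 := by
  rw [wt, card_eq_one]
  exact ⟨i, by ext j; by_cases h : j = i <;> simp [h]⟩

theorem walsh_single_one (i : Fin n) (y : Fin n → ZMod 2) :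
    walsh (Pi.single i 1) y = if y i = 0 then 1 else -1 := by
  rw [walsh, single_dotProduct, one_mul]
  rcases (by decide : ∀ a : ZMod 2, a = 0 ∨ a = 1) (y i) with h | h <;> simp [h, signChar_one]

variable (n) in
/-- The real functions on `𝔽₂ⁿ` of Fourier degree at most `k`. -/
noncomputable def lowDegree (k : ℕ) : Submodule ℝ ((Fin n → ZMod 2) → ℝ) :=
  Submodule.span ℝ (walsh '' {v | wt v ≤ k})

theorem walsh_mem_lowDegree {k : ℕ} {v : Fin n → ZMod 2} (hv : wt v ≤ k) :
    walsh v ∈ lowDegree n k :=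
  Submodule.subset_span ⟨v, hv, rfl⟩

theorem lowDegree_mono {k l : ℕ} (h : k ≤ l) : lowDegree n k ≤ lowDegree n l :=
  Submodule.span_mono (Set.image_mono fun _ hv => le_trans hv h)

theorem lowDegree_mul_le (k l : ℕ) : lowDegree n k * lowDegree n l ≤ lowDegree n (k + l) := by
  rw [lowDegree, lowDegree, Submodule.span_mul_span, Submodule.span_le]
  rintro _ ⟨_, ⟨u, hu, rfl⟩, _, ⟨v, hv, rfl⟩, rfl⟩
  have : walsh u * walsh v = walsh (u + v) := funext fun y => (walsh_add_left u v y).symm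
  show walsh u * walsh v ∈ _
  rw [this]
  exact Submodule.subset_span ⟨u + v, (wt_add_le u v).trans (add_le_add hu hv), rfl⟩

theorem one_mem_lowDegree_zero : (1 : (Fin n → ZMod 2) → ℝ) ∈ lowDegree n 0 := by
  have : (1 : (Fin n → ZMod 2) → ℝ) = walsh 0 := funext fun y => (walsh_zero_left y).symm
  exact this ▸ walsh_mem_lowDegree (by simp [wt])

theorem wt_mem_lowDegree_one : (fun y : Fin n → ZMod 2 => (wt y : ℝ)) ∈ lowDegree n 1 := by
  have : (fun y : Fin n → ZMod 2 => (wt y : ℝ)) =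
      ∑ i, (2⁻¹ : ℝ) • (1 - walsh (Pi.single i 1)) := by
    ext y
    simp only [Finset.sum_apply, Pi.smul_apply, Pi.sub_apply, Pi.one_apply, walsh_single_one,
      wt, card_filter, smul_eq_mul]
    push_cast
    refine sum_congr rfl fun i _ => ?_
    by_cases h : y i = 0 <;> norm_num [h]
  rw [this]
  refine Submodule.sum_mem _ fun i _ => Submodule.smul_mem _ _ (Submodule.sub_mem _ ?_ ?_)
  · exact lowDegree_mono zero_le_one one_mem_lowDegree_zero
  · exact walsh_mem_lowDegree (wt_single_one i).le

theorem const_sub_wt_mem_lowDegree_one (a : ℝ) :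
    (fun y : Fin n → ZMod 2 => a - wt y) ∈ lowDegree n 1 := by
  convert Submodule.sub_mem _ (Submodule.smul_mem _ a
    (lowDegree_mono zero_le_one one_mem_lowDegree_zero)) wt_mem_lowDegree_one using 1
  ext y
  simp

theorem prod_mem_lowDegree {α : Type*} (W : Finset α) (f : α → (Fin n → ZMod 2) → ℝ)
    (hf : ∀ a ∈ W, f a ∈ lowDegree n 1) : ∏ a ∈ W, f a ∈ lowDegree n #W := by
  induction W using Finset.cons_induction with
  | empty => simpa using one_mem_lowDegree_zero
  | cons a W ha ih =>
    rw [prod_cons, card_cons, add_comm]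
    exact lowDegree_mul_le 1 #W (Submodule.mul_mem_mul (hf a (mem_cons_self a W))
      (ih fun b hb => hf b (mem_cons_of_mem hb)))

theorem sum_walsh_mul_eq_zero_of_mem_lowDegree {D : Submodule (ZMod 2) (Fin n → ZMod 2)}
    [Fintype D] {x : Fin n → ZMod 2} {s : ℕ}
    (hx : ∀ v, wt v ≤ s → ∃ y ∈ D, (x + v) ⬝ᵥ y ≠ 0)
    {F : (Fin n → ZMod 2) → ℝ} (hF : F ∈ lowDegree n s) : ∑ y : D, walsh x y * F y = 0 := by
  induction hF using Submodule.span_induction with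
  | mem _ h =>
    obtain ⟨v, hv, rfl⟩ := h
    simp_rw [← walsh_add_left]
    exact sum_walsh_eq_zero D (hx v hv)
  | zero => simp
  | add f g _ _ hf hg => simp [mul_add, sum_add_distrib, hf, hg]
  | smul a f _ hf => simp [mul_left_comm _ a, ← mul_sum, hf]

def dualCode (C : Submodule (ZMod 2) (Fin n → ZMod 2)) : Submodule (ZMod 2) (Fin n → ZMod 2) where
  carrier := dualSet C
  add_mem' hx hy c hc := by rw [add_dotProduct, hx c hc, hy c hc, add_zero]
  zero_mem' c _ := zero_dotProduct c
  smul_mem' a x hx c hc := by rw [smul_dotProduct, hx c hc, smul_zero]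

theorem cosetMinWt_le_card {C : Submodule (ZMod 2) (Fin n → ZMod 2)} (x : Fin n → ZMod 2)
    (W : Finset ℕ) (hW0 : 0 ∉ W)
    (hW : ∀ y ∈ dualSet (C : Set (Fin n → ZMod 2)), y ≠ 0 → wt y ∈ W) :
    cosetMinWt C x ≤ #W := by
  classical
  by_contra! hlt
  have hx : ∀ v, wt v ≤ #W → ∃ y ∈ dualCode C, (x + v) ⬝ᵥ y ≠ 0 := fun v hv =>
    exists_dotProduct_ne_zero_of_notMem fun hC => by
      have := cosetMinWt_le x hC
      rw [← add_assoc, ZModModule.add_self, zero_add] at this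
      omega
  let F : (Fin n → ZMod 2) → ℝ := ∏ w ∈ W, fun y => (w : ℝ) - wt y
  have hF : F ∈ lowDegree n #W :=
    prod_mem_lowDegree W _ fun w _ => const_sub_wt_mem_lowDegree_one w
  have hsum := sum_walsh_mul_eq_zero_of_mem_lowDegree hx hF
  rw [Fintype.sum_eq_single ⟨0, (dualCode C).zero_mem⟩ fun y hy => ?_] at hsum
  · simp [F, walsh, wt, prod_apply, prod_eq_zero_iff] at hsum
    exact hW0 hsum
  · simp only [F, prod_apply]
    exact mul_eq_zero_of_right _
      (prod_eq_zero (hW y y.2 fun h => hy (Subtype.ext h)) (sub_self _))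

theorem stmt7 {n : ℕ} (C : Submodule (ZMod 2) (Fin n → ZMod 2)) :
    coveringRadius C ≤
      ({i | 1 ≤ i ∧ i ≤ n ∧ ∃ x ∈ dualSet (C : Set (Fin n → ZMod 2)), wt x = i}).ncard := by
  set S := {i | 1 ≤ i ∧ i ≤ n ∧ ∃ x ∈ dualSet (C : Set (Fin n → ZMod 2)), wt x = i}
  have hS : S.Finite := (Set.finite_Icc 1 n).subset fun i hi => ⟨hi.1, hi.2.1⟩
  refine csSup_le ⟨_, 0, rfl⟩ ?_
  rintro _ ⟨x, rfl⟩
  rw [Set.ncard_eq_toFinset_card S hS]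
  refine cosetMinWt_le_card x hS.toFinset (by simp [S]) fun y hy hy0 => ?_
  rw [Set.Finite.mem_toFinset]
  exact ⟨hammingNorm_pos_iff.mpr hy0, hammingNorm_le_card_fintype.trans (Fintype.card_fin n).le,
    y, hy, rfl⟩
end

section
/- Let D be a doubly even self-dual code of length n ≡ 0 (mod 8) and let v + D be a coset of D with v ∉ D and wt(x) ≡ 2 (mod 4) for some x ∈ v + D. With D₀ = {y ∈ D : v·y = 0} and cosets D₀, D₁, D₂, D₃ of D₀ in D₀⊥ such that D = D₀ ∪ D₂ and v + D = D₁ ∪ D₃, the coset D₁ consists precisely of the vectors of v + D of weight ≡ 2 (mod 4) and D₃ consists precisely of those of weight ≡ 0 (mod 4). -/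
open Matrix

/-! The supports of `x` and `y` overlap in a set whose size has the parity of `x ⬝ᵥ y`, so
`wt (x + y) ≡ wt x + wt y + 2 (x ⬝ᵥ y) (mod 4)`. Two vectors `x, y` of `v + D` differ by
`e = x + y ∈ D`, and `x ⬝ᵥ e = v ⬝ᵥ e` because `D` is self-orthogonal; as `4 ∣ wt e`, this gives
`wt y ≡ wt x + 2 (v ⬝ᵥ e) (mod 4)`. So inside `v + D` the weights congruent to `wt x` mod 4 are
exactly those of the coset `x + D₀`, and the other coset of `D₀` carries the other residue. -/

section Weight

variable {n : ℕ}

open Finset in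
def overlap (x y : Fin n → ZMod 2) : ℕ :=
  #{i | x i ≠ 0 ∧ y i ≠ 0}

theorem wt_add_add_two_mul_overlap (x y : Fin n → ZMod 2) :
    wt (x + y) + 2 * overlap x y = wt x + wt y := by
  simp only [wt, overlap, Finset.card_filter, Pi.add_apply, Finset.mul_sum,
    ← Finset.sum_add_distrib]
  refine Finset.sum_congr rfl fun i _ => ?_
  generalize x i = a, y i = b
  revert a b
  decide

theorem natCast_overlap (x y : Fin n → ZMod 2) : (overlap x y : ZMod 2) = x ⬝ᵥ y := by
  rw [overlap, Finset.card_filter, Nat.cast_sum, dotProduct]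
  refine Finset.sum_congr rfl fun i _ => ?_
  generalize x i = a, y i = b
  revert a b
  decide

theorem wt_add_mod_four (x y : Fin n → ZMod 2) :
    wt (x + y) % 4 = (wt x + wt y + 2 * (x ⬝ᵥ y).val) % 4 := by
  have hsum := wt_add_add_two_mul_overlap x y
  have hval : (x ⬝ᵥ y).val = overlap x y % 2 := by rw [← natCast_overlap, ZMod.val_natCast]
  omega

end Weight

theorem mem_image_add_left_iff_of_mem {G S : Type*} [AddGroup G] [SetLike S G]
    [AddSubgroupClass S G] {H : S} {w x₀ : G} (hx₀ : x₀ ∈ (w + ·) '' (H : Set G)) (x : G) :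
    x ∈ (w + ·) '' (H : Set G) ↔ -x₀ + x ∈ H := by
  obtain ⟨h, hh, rfl⟩ := hx₀
  rw [Set.image_add_left, Set.mem_preimage, SetLike.mem_coe, neg_add_rev, add_assoc,
    add_mem_cancel_left (neg_mem hh)]

section Coset

variable {n : ℕ} {D : Submodule (ZMod 2) (Fin n → ZMod 2)} {v : Fin n → ZMod 2}

variable (D v) in
def orthSubcode : Submodule (ZMod 2) (Fin n → ZMod 2) where
  carrier := {x | x ∈ D ∧ v ⬝ᵥ x = 0}
  add_mem' hx hy := ⟨D.add_mem hx.1 hy.1, by rw [dotProduct_add, hx.2, hy.2, add_zero]⟩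
  zero_mem' := ⟨D.zero_mem, dotProduct_zero v⟩
  smul_mem' c _ hx := ⟨D.smul_mem c hx.1, by rw [dotProduct_smul, hx.2, smul_zero]⟩

theorem mem_orthSubcode {x : Fin n → ZMod 2} : x ∈ orthSubcode D v ↔ x ∈ D ∧ v ⬝ᵥ x = 0 :=
  Iff.rfl

theorem add_mem_of_mem_image_add {x y : Fin n → ZMod 2} (hx : x ∈ (v + ·) '' (D : Set _))
    (hy : y ∈ (v + ·) '' (D : Set _)) : x + y ∈ D := by
  obtain ⟨c, hc, rfl⟩ := hx
  obtain ⟨c', hc', rfl⟩ := hy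
  show (v + c) + (v + c') ∈ D
  rw [add_comm v c, ZModModule.add_add_add_cancel]
  exact D.add_mem hc hc'

theorem wt_mod_four_of_mem_image_add (hD : (D : Set (Fin n → ZMod 2)) ⊆ dualSet D)
    (hde : ∀ x ∈ D, 4 ∣ wt x) {x y : Fin n → ZMod 2} (hx : x ∈ (v + ·) '' (D : Set _))
    (hy : y ∈ (v + ·) '' (D : Set _)) :
    wt y % 4 = (wt x + 2 * (v ⬝ᵥ (x + y)).val) % 4 := by
  have he : x + y ∈ D := add_mem_of_mem_image_add hx hy
  have hy_eq : y = x + (x + y) := by rw [← add_assoc, ZModModule.add_self, zero_add]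
  have hdot : x ⬝ᵥ (x + y) = v ⬝ᵥ (x + y) := by
    obtain ⟨c, hc, rfl⟩ := hx
    rw [add_dotProduct, hD hc _ he, add_zero]
  have hwt := wt_add_mod_four x (x + y)
  rw [← hy_eq, hdot] at hwt
  have h4 := hde _ he
  omega

theorem image_add_orthSubcode_eq_setOf (hD : (D : Set (Fin n → ZMod 2)) ⊆ dualSet D)
    (hde : ∀ x ∈ D, 4 ∣ wt x) {w x₀ : Fin n → ZMod 2} {A : Set (Fin n → ZMod 2)}
    (hA : A = (w + ·) '' (orthSubcode D v : Set _)) (hAV : A ⊆ (v + ·) '' (D : Set _))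
    (hx₀ : x₀ ∈ A) :
    A = {x | x ∈ (v + ·) '' (D : Set _) ∧ wt x % 4 = wt x₀ % 4} := by
  have hx₀V := hAV hx₀
  subst hA
  ext x
  have hmem := mem_image_add_left_iff_of_mem hx₀ x
  rw [ZModModule.neg_eq_self, mem_orthSubcode] at hmem
  constructor
  · intro hx
    have hwt := wt_mod_four_of_mem_image_add hD hde hx₀V (hAV hx)
    rw [(hmem.1 hx).2, ZMod.val_zero] at hwt
    exact ⟨hAV hx, by omega⟩
  · rintro ⟨hxV, hmod⟩
    have hwt := wt_mod_four_of_mem_image_add hD hde hx₀V hxV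
    have hval := ZMod.val_lt (v ⬝ᵥ (x₀ + x))
    refine hmem.2 ⟨add_mem_of_mem_image_add hx₀V hxV, ?_⟩
    rw [← ZMod.val_eq_zero]
    omega

theorem eq_setOf_wt_mod_four_of_union (hD : (D : Set (Fin n → ZMod 2)) ⊆ dualSet D)
    (hde : ∀ x ∈ D, 4 ∣ wt x) {w x₀ : Fin n → ZMod 2} {A B : Set (Fin n → ZMod 2)}
    (hA : A = (w + ·) '' (orthSubcode D v : Set _)) (hAB : Disjoint A B)
    (hV : (v + ·) '' (D : Set _) = A ∪ B) (hx₀ : x₀ ∈ A) (hx₀2 : wt x₀ % 4 = 2) :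
    A = {x | x ∈ (v + ·) '' (D : Set _) ∧ wt x % 4 = 2} ∧
      B = {x | x ∈ (v + ·) '' (D : Set _) ∧ wt x % 4 = 0} := by
  have hAV : A ⊆ (v + ·) '' (D : Set _) := hV ▸ Set.subset_union_left
  have hA_eq := image_add_orthSubcode_eq_setOf hD hde hA hAV hx₀
  rw [hx₀2] at hA_eq
  refine ⟨hA_eq, Set.ext fun x => ⟨fun hx => ?_, fun ⟨hxV, hx0⟩ => ?_⟩⟩
  · have hxV : x ∈ (v + ·) '' (D : Set _) := hV ▸ Set.mem_union_right A hx
    have hx2 : wt x % 4 ≠ 2 := fun hx2 => Set.disjoint_right.mp hAB hx (hA_eq ▸ ⟨hxV, hx2⟩)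
    have hwt := wt_mod_four_of_mem_image_add hD hde (hAV hx₀) hxV
    have hval := ZMod.val_lt (v ⬝ᵥ (x₀ + x))
    exact ⟨hxV, by omega⟩
  · rcases (hV ▸ hxV : x ∈ A ∪ B) with hxA | hxB
    · have hx2 := (hA_eq ▸ hxA).2
      omega
    · exact hxB

end Coset

theorem stmt13_general {n : ℕ} (D : Submodule (ZMod 2) (Fin n → ZMod 2))
    (hsd : (D : Set (Fin n → ZMod 2)) = dualSet (D : Set (Fin n → ZMod 2)))
    (hde : ∀ x ∈ D, 4 ∣ wt x)
    (v : Fin n → ZMod 2)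
    (hx : ∃ x ∈ (v + ·) '' (D : Set (Fin n → ZMod 2)), wt x % 4 = 2)
    (D₀ D₁ D₃ : Set (Fin n → ZMod 2))
    (hD₀ : D₀ = {x | x ∈ D ∧ v ⬝ᵥ x = 0})
    (h₁ : ∃ w, D₁ = (w + ·) '' D₀) (h₃ : ∃ w, D₃ = (w + ·) '' D₀)
    (hdisj : Disjoint D₁ D₃)
    (hvD : (v + ·) '' (D : Set (Fin n → ZMod 2)) = D₁ ∪ D₃) :
    (D₁ = {x | x ∈ (v + ·) '' (D : Set (Fin n → ZMod 2)) ∧ wt x % 4 = 2} ∧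
     D₃ = {x | x ∈ (v + ·) '' (D : Set (Fin n → ZMod 2)) ∧ wt x % 4 = 0}) ∨
    (D₃ = {x | x ∈ (v + ·) '' (D : Set (Fin n → ZMod 2)) ∧ wt x % 4 = 2} ∧
     D₁ = {x | x ∈ (v + ·) '' (D : Set (Fin n → ZMod 2)) ∧ wt x % 4 = 0}) := by
  obtain ⟨x₀, hx₀V, hx₀2⟩ := hx
  obtain rfl : D₀ = orthSubcode D v := hD₀
  rcases (hvD ▸ hx₀V : x₀ ∈ D₁ ∪ D₃) with hx₀ | hx₀
  · obtain ⟨w, hw⟩ := h₁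
    exact .inl (eq_setOf_wt_mod_four_of_union hsd.subset hde hw hdisj hvD hx₀ hx₀2)
  · obtain ⟨w, hw⟩ := h₃
    exact .inr (eq_setOf_wt_mod_four_of_union hsd.subset hde hw hdisj.symm
      (hvD.trans (Set.union_comm _ _)) hx₀ hx₀2)

theorem stmt13 {n : ℕ} (h8 : 8 ∣ n) (D : Submodule (ZMod 2) (Fin n → ZMod 2))
    (hsd : (D : Set (Fin n → ZMod 2)) = dualSet (D : Set (Fin n → ZMod 2)))
    (hde : ∀ x ∈ D, 4 ∣ wt x)
    (v : Fin n → ZMod 2) (hv : v ∉ D)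
    (hx : ∃ x ∈ (v + ·) '' (D : Set (Fin n → ZMod 2)), wt x % 4 = 2)
    (D₀ D₁ D₃ : Set (Fin n → ZMod 2))
    (hD₀ : D₀ = {x | x ∈ D ∧ v ⬝ᵥ x = 0})
    (h₁ : ∃ w, D₁ = (w + ·) '' D₀) (h₃ : ∃ w, D₃ = (w + ·) '' D₀)
    (hdisj : Disjoint D₁ D₃)
    (hvD : (v + ·) '' (D : Set (Fin n → ZMod 2)) = D₁ ∪ D₃) :
    (D₁ = {x | x ∈ (v + ·) '' (D : Set (Fin n → ZMod 2)) ∧ wt x % 4 = 2} ∧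
     D₃ = {x | x ∈ (v + ·) '' (D : Set (Fin n → ZMod 2)) ∧ wt x % 4 = 0}) ∨
    (D₃ = {x | x ∈ (v + ·) '' (D : Set (Fin n → ZMod 2)) ∧ wt x % 4 = 2} ∧
     D₁ = {x | x ∈ (v + ·) '' (D : Set (Fin n → ZMod 2)) ∧ wt x % 4 = 0}) :=
  stmt13_general D hsd hde v hx D₀ D₁ D₃ hD₀ h₁ h₃ hdisj hvD
end
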